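/- arXiv:1910.08411 — 4 statements merged into one kernel-verified Lean document; each statement's English description precedes it below -/
import Mathlib

section
/- For every real number β with 0 < β ≤ 4/27, setting φ(t) := t·(1 − 3β − 3β²t − β³t²), t_max := (−3 + √(4/β − 3))/(2β) and t₀ := (−3 + √(3/β))/(3β), one has 0 < t₀ < t_max, t₀ is a critical point of φ (i.e. φ'(t₀) = 0), and φ(t₀) ≥ 1. -/
/-!
In the variable `y = 1 + βt` the cubic is `φ(t) = t + 1 - y³`, so `φ'(t) = 1 - 3βy²` vanishes at
`y₀ = 1/√(3β) = √(3/β)/3`, which is exactly `1 + βt₀`. Using `1/β = 3y₀²` one finds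
`φ(t₀) = 1 + y₀²(2y₀ - 3)`, and `y₀ ≥ 3/2` is equivalent to `β ≤ 4/27`. Since `φ = t · q(t)` with
`q(t) = 1 - β(y² + y + 1)`, the bound `φ(t₀) ≥ 1` makes `q(t₀) > 0 = q(t_max)`, and `q` decreases
for `y ≥ -1/2`, whence `t₀ < t_max`.
-/

open Real

def phiFactor (β t : ℝ) : ℝ := 1 - 3 * β - 3 * β ^ 2 * t - β ^ 3 * t ^ 2

def phi (β t : ℝ) : ℝ := t * phiFactor β t

lemma phi_eq (β t : ℝ) : phi β t = t + 1 - (1 + β * t) ^ 3 := by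
  unfold phi phiFactor; ring

lemma phiFactor_eq (β t : ℝ) :
    phiFactor β t = 1 - β * ((1 + β * t) ^ 2 + (1 + β * t) + 1) := by
  unfold phiFactor; ring

lemma hasDerivAt_phi (β t : ℝ) : HasDerivAt (phi β) (1 - 3 * β * (1 + β * t) ^ 2) t := by
  rw [show phi β = fun s => s + 1 - (1 + β * s) ^ 3 from funext (phi_eq β)]
  refine (((hasDerivAt_id' t).add_const 1).fun_sub
    ((((hasDerivAt_id' t).const_mul β).const_add 1).fun_pow 3)).congr_deriv ?_
  norm_num; ring

lemma phi_eq_of_three_mul_mul_sq_eq_one {β t : ℝ} (h : 3 * β * (1 + β * t) ^ 2 = 1) :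
    phi β t = 1 + (1 + β * t) ^ 2 * (2 * (1 + β * t) - 3) := by
  rw [phi_eq]; linear_combination (-t) * h

lemma lt_of_phiFactor_pos_of_phiFactor_eq_zero {β t t' : ℝ} (hβ : 0 < β)
    (ht' : -1 / 2 ≤ 1 + β * t') (hpos : 0 < phiFactor β t) (hzero : phiFactor β t' = 0) :
    t < t' := by
  rw [phiFactor_eq] at hpos hzero
  by_contra! hle
  have hy : 1 + β * t' ≤ 1 + β * t := by gcongr
  nlinarith [mul_nonneg (sub_nonneg.2 hy) (by linarith : (0 : ℝ) ≤ (1 + β * t) + (1 + β * t') + 1)]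

lemma one_add_mul_t₀ {β : ℝ} (hβ : 0 < β) :
    1 + β * ((-3 + √(3 / β)) / (3 * β)) = √(3 / β) / 3 := by
  field_simp; ring

lemma three_mul_mul_sq_sqrt_div_three {β : ℝ} (hβ : 0 < β) : 3 * β * (√(3 / β) / 3) ^ 2 = 1 := by
  rw [div_pow, sq_sqrt (by positivity)]; field_simp

lemma nine_halves_le_sqrt {β : ℝ} (hβ0 : 0 < β) (hβ : β ≤ 4 / 27) : 9 / 2 ≤ √(3 / β) := by
  rw [le_sqrt (by norm_num) (by positivity), le_div_iff₀ hβ0]; linarith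

lemma one_add_mul_tmax {β : ℝ} (hβ : 0 < β) :
    1 + β * ((-3 + √(4 / β - 3)) / (2 * β)) = (√(4 / β - 3) - 1) / 2 := by
  field_simp; ring

lemma phiFactor_tmax {β : ℝ} (hβ0 : 0 < β) (hβ : β ≤ 4 / 3) :
    phiFactor β ((-3 + √(4 / β - 3)) / (2 * β)) = 0 := by
  have hu : √(4 / β - 3) ^ 2 = 4 / β - 3 :=
    sq_sqrt (by rw [sub_nonneg, le_div_iff₀ hβ0]; linarith)
  rw [phiFactor_eq, one_add_mul_tmax hβ0]
  generalize √(4 / β - 3) = u at hu ⊢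
  field_simp at hu ⊢
  linear_combination -hu

/-- For `0 < β ≤ 4/27`, with `φ(t) = t(1 − 3β − 3β²t − β³t²)`,
`t_max = (−3 + √(4/β − 3))/(2β)` and `t₀ = (−3 + √(3/β))/(3β)`, one has
`0 < t₀ < t_max`, `φ'(t₀) = 0`, and `φ(t₀) ≥ 1`. -/
theorem phi_critical_point (β : ℝ) (hβ0 : 0 < β) (hβ : β ≤ 4 / 27)
    (φ : ℝ → ℝ) (hφ : φ = fun t => t * (1 - 3 * β - 3 * β ^ 2 * t - β ^ 3 * t ^ 2))
    (tmax : ℝ) (htmax : tmax = (-3 + Real.sqrt (4 / β - 3)) / (2 * β))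
    (t₀ : ℝ) (ht₀ : t₀ = (-3 + Real.sqrt (3 / β)) / (3 * β)) :
    0 < t₀ ∧ t₀ < tmax ∧ deriv φ t₀ = 0 ∧ 1 ≤ φ t₀ := by
  change φ = phi β at hφ
  subst hφ
  have hy₀ : 1 + β * t₀ = √(3 / β) / 3 := ht₀ ▸ one_add_mul_t₀ hβ0
  have hcrit : 3 * β * (1 + β * t₀) ^ 2 = 1 := hy₀ ▸ three_mul_mul_sq_sqrt_div_three hβ0
  have hy₀_ge : 3 / 2 ≤ 1 + β * t₀ := by linarith [nine_halves_le_sqrt hβ0 hβ]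
  have ht₀_pos : 0 < t₀ := pos_of_mul_pos_right (by linarith : 0 < β * t₀) hβ0.le
  have hval : 1 ≤ phi β t₀ := by
    rw [phi_eq_of_three_mul_mul_sq_eq_one hcrit]
    exact le_add_of_nonneg_right (mul_nonneg (sq_nonneg _) (by linarith))
  have hfactor_pos : 0 < phiFactor β t₀ :=
    pos_of_mul_pos_right (by unfold phi at hval; linarith) ht₀_pos.le
  have htmax_ge : -1 / 2 ≤ 1 + β * tmax := by
    rw [htmax, one_add_mul_tmax hβ0]; linarith [sqrt_nonneg (4 / β - 3)]
  refine ⟨ht₀_pos, ?_, ?_, hval⟩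
  · exact lt_of_phiFactor_pos_of_phiFactor_eq_zero hβ0 htmax_ge hfactor_pos
      (htmax ▸ phiFactor_tmax hβ0 (by linarith))
  · rw [(hasDerivAt_phi β t₀).deriv, hcrit, sub_self]
end

section
/- Let k be a natural number, l > 0, and let f : [0, l] → ℝ be of class C^{k+1}. If f vanishes at k + 1 pairwise distinct points of [0, l], then (∫₀^l f(x)² dx)^{1/2} ≤ l^{k+1} (∫₀^l (f^{(k+1)}(x))² dx)^{1/2}. -/
/-!
Iterating Rolle's theorem, the `j`-th derivative of `f` has `k + 1 - j` ordered zeros in `[0, l]`,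
so by the fundamental theorem of calculus `|f^{(j)}| ≤ ∫₀^l |f^{(j+1)}| ≤ l · sup |f^{(j+1)}|`,
which gives the pointwise bound `|f| ≤ l^k ∫₀^l |f^{(k+1)}|` on `[0, l]`. Cauchy–Schwarz bounds
`∫₀^l |f^{(k+1)}|` by `√l ‖f^{(k+1)}‖₂`, so `|f| ≤ l^(k + 1/2) ‖f^{(k+1)}‖₂` pointwise, and
integrating its square over `[0, l]` gives the claim.
-/

open MeasureTheory Set
open scoped Interval

theorem integral_le_mul_sub_of_abs_le {a b M : ℝ} (hab : a ≤ b) {h : ℝ → ℝ}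
    (hh : ∀ u ∈ Icc a b, |h u| ≤ M) : ∫ u in a..b, h u ≤ M * (b - a) := by
  have hbound := intervalIntegral.norm_integral_le_of_norm_le_const (a := a) (b := b) (f := h)
    fun u hu => hh u (Ioc_subset_Icc_self (uIoc_of_le hab ▸ hu))
  rw [Real.norm_eq_abs, abs_of_nonneg (sub_nonneg.2 hab)] at hbound
  exact (le_abs_self _).trans hbound

theorem abs_le_integral_abs_deriv_of_eq_zero {a b ξ t : ℝ} {g g' : ℝ → ℝ}
    (hg : ContinuousOn g (Icc a b)) (hg' : IntervalIntegrable g' volume a b)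
    (hderiv : ∀ u ∈ Ioo a b, HasDerivAt g (g' u) u)
    (hξ : ξ ∈ Icc a b) (hgξ : g ξ = 0) (ht : t ∈ Icc a b) :
    |g t| ≤ ∫ u in a..b, |g' u| := by
  have hab : a ≤ b := hξ.1.trans hξ.2
  have hlo : a ≤ min ξ t := le_min hξ.1 ht.1
  have hhi : max ξ t ≤ b := max_le hξ.2 ht.2
  have hftc : ∫ u in ξ..t, g' u = g t := by
    rw [intervalIntegral.integral_eq_sub_of_hasDeriv_right (hg.mono (uIcc_subset_Icc hξ ht))
      (fun u hu => (hderiv u (Ioo_subset_Ioo hlo hhi hu)).hasDerivWithinAt)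
      (hg'.mono_set (by rw [uIcc_of_le hab]; exact uIcc_subset_Icc hξ ht)), hgξ, sub_zero]
  calc |g t| = ‖∫ u in ξ..t, g' u‖ := by rw [hftc, Real.norm_eq_abs]
    _ ≤ ∫ u in Ι ξ t, ‖g' u‖ := intervalIntegral.norm_integral_le_integral_norm_uIoc
    _ ≤ ∫ u in Ioc a b, ‖g' u‖ :=
      setIntegral_mono_set ((intervalIntegrable_iff_integrableOn_Ioc_of_le hab).1 hg').norm
        (Filter.Eventually.of_forall fun _ => norm_nonneg _) (Ioc_subset_Ioc hlo hhi).eventuallyLE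
    _ = ∫ u in a..b, |g' u| := (intervalIntegral.integral_of_le hab).symm

theorem exists_strictMono_deriv_eq_zero {n : ℕ} {a b : ℝ} {g g' : ℝ → ℝ}
    {y : Fin (n + 2) → ℝ} (hg : ContinuousOn g (Icc a b))
    (hderiv : ∀ u ∈ Ioo a b, HasDerivAt g (g' u) u)
    (hy : StrictMono y) (hy_mem : ∀ i, y i ∈ Icc a b) (hgy : ∀ i, g (y i) = 0) :
    ∃ z : Fin (n + 1) → ℝ, StrictMono z ∧ (∀ i, z i ∈ Icc a b) ∧ ∀ i, g' (z i) = 0 := by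
  have hrolle (i : Fin (n + 1)) : ∃ c ∈ Ioo (y i.castSucc) (y i.succ), g' c = 0 :=
    exists_hasDerivAt_eq_zero (hy Fin.castSucc_lt_succ)
      (hg.mono (Icc_subset_Icc (hy_mem _).1 (hy_mem _).2)) (by rw [hgy, hgy])
      fun u hu => hderiv u (Ioo_subset_Ioo (hy_mem _).1 (hy_mem _).2 hu)
  choose z hz_mem hgz using hrolle
  refine ⟨z, Fin.strictMono_iff_lt_succ.2 fun i => ?_, fun i => ?_, hgz⟩
  · calc z i.castSucc < y i.castSucc.succ := (hz_mem _).2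
      _ = y i.succ.castSucc := by rw [Fin.succ_castSucc]
      _ < z i.succ := (hz_mem _).1
  · exact Ioo_subset_Icc_self (Ioo_subset_Ioo (hy_mem _).1 (hy_mem _).2 (hz_mem i))

theorem DifferentiableOn.hasDerivAt_derivWithin_Icc {a b u : ℝ} {g : ℝ → ℝ}
    (hg : DifferentiableOn ℝ g (Icc a b)) (hu : u ∈ Ioo a b) :
    HasDerivAt g (derivWithin g (Icc a b) u) u :=
  (hg u (Ioo_subset_Icc_self hu)).hasDerivWithinAt.hasDerivAt (Icc_mem_nhds hu.1 hu.2)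

theorem abs_le_integral_abs_derivWithin_of_eq_zero {a b ξ t : ℝ} (hab : a < b) {g : ℝ → ℝ}
    (hg : ContDiffOn ℝ 1 g (Icc a b)) (hξ : ξ ∈ Icc a b) (hgξ : g ξ = 0) (ht : t ∈ Icc a b) :
    |g t| ≤ ∫ u in a..b, |derivWithin g (Icc a b) u| :=
  abs_le_integral_abs_deriv_of_eq_zero hg.continuousOn
    ((hg.continuousOn_derivWithin (uniqueDiffOn_Icc hab) le_rfl).intervalIntegrable_of_Icc hab.le)
    (fun _ hu => (hg.differentiableOn one_ne_zero).hasDerivAt_derivWithin_Icc hu) hξ hgξ ht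

theorem abs_le_pow_mul_integral_abs_iteratedDerivWithin {a b : ℝ} (hab : a < b) (n : ℕ)
    {g : ℝ → ℝ} (hg : ContDiffOn ℝ (n + 1) g (Icc a b)) {y : Fin (n + 1) → ℝ}
    (hy : StrictMono y) (hy_mem : ∀ i, y i ∈ Icc a b) (hgy : ∀ i, g (y i) = 0)
    {t : ℝ} (ht : t ∈ Icc a b) :
    |g t| ≤ (b - a) ^ n * ∫ u in a..b, |iteratedDerivWithin (n + 1) g (Icc a b) u| := by
  induction n generalizing g t with
  | zero => simpa using abs_le_integral_abs_derivWithin_of_eq_zero hab hg (hy_mem 0) (hgy 0) ht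
  | succ n ih =>
    have hg' : ContDiffOn ℝ (n + 1) (derivWithin g (Icc a b)) (Icc a b) :=
      hg.derivWithin (uniqueDiffOn_Icc hab) le_rfl
    obtain ⟨z, hz, hz_mem, hgz⟩ := exists_strictMono_deriv_eq_zero hg.continuousOn
      (fun _ hu => (hg.differentiableOn (by simp)).hasDerivAt_derivWithin_Icc hu) hy hy_mem hgy
    rw [iteratedDerivWithin_succ', pow_succ]
    calc |g t| ≤ ∫ u in a..b, |derivWithin g (Icc a b) u| :=
          abs_le_integral_abs_derivWithin_of_eq_zero hab (hg.of_le (by simp)) (hy_mem 0) (hgy 0) ht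
      _ ≤ _ := (integral_le_mul_sub_of_abs_le hab.le fun u hu =>
          (abs_abs _).trans_le (ih hg' hz hz_mem hgz hu)).trans_eq (by ring)

theorem sq_integral_abs_le_mul_integral_sq {a b : ℝ} (hab : a ≤ b) {h : ℝ → ℝ}
    (hh : IntervalIntegrable h volume a b)
    (hh2 : IntervalIntegrable (fun u => h u ^ 2) volume a b) :
    (∫ u in a..b, |h u|) ^ 2 ≤ (b - a) * ∫ u in a..b, h u ^ 2 := by
  rcases hab.eq_or_lt with rfl | hab
  · simp
  set A := ∫ u in a..b, |h u|
  set S := ∫ u in a..b, h u ^ 2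
  -- integrate `2 c |h| ≤ h² + c²` with `c` the mean of `|h|`
  set c := A / (b - a)
  have hamgm : ∫ u in a..b, 2 * c * |h u| ≤ ∫ u in a..b, (h u ^ 2 + c ^ 2) :=
    intervalIntegral.integral_mono_on hab.le (hh.abs.const_mul _) (hh2.add intervalIntegrable_const)
      fun u _ => by nlinarith [sq_nonneg (|h u| - c), sq_abs (h u)]
  rw [intervalIntegral.integral_const_mul, intervalIntegral.integral_add hh2 intervalIntegrable_const,
    intervalIntegral.integral_const, smul_eq_mul] at hamgm
  have hba : b - a ≠ 0 := (sub_pos.2 hab).ne'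
  calc A ^ 2 = (b - a) * (2 * c * A - (b - a) * c ^ 2) := by simp only [c]; field_simp; ring
    _ ≤ (b - a) * S := by gcongr; linarith

/-- If `f : [0,l] → ℝ` is of class `C^{k+1}` and vanishes at `k+1` pairwise
distinct points of `[0,l]`, then
`(∫₀^l f²)^{1/2} ≤ l^{k+1} (∫₀^l (f^{(k+1)})²)^{1/2}`. -/
theorem L2_interp_estimate (k : ℕ) (l : ℝ) (hl : 0 < l) (f : ℝ → ℝ)
    (hf : ContDiffOn ℝ (k + 1) f (Set.Icc 0 l))
    (x : Fin (k + 1) → ℝ) (hxinj : Function.Injective x)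
    (hxmem : ∀ i, x i ∈ Set.Icc (0 : ℝ) l) (hfx : ∀ i, f (x i) = 0) :
    Real.sqrt (∫ t in (0 : ℝ)..l, (f t) ^ 2) ≤
      l ^ (k + 1) *
        Real.sqrt (∫ t in (0 : ℝ)..l, (iteratedDerivWithin (k + 1) f (Set.Icc 0 l) t) ^ 2) := by
  set D := iteratedDerivWithin (k + 1) f (Icc 0 l)
  have hD : ContinuousOn D (Icc 0 l) :=
    hf.continuousOn_iteratedDerivWithin le_rfl (uniqueDiffOn_Icc hl)
  have hsorted : StrictMono (x ∘ Tuple.sort x) :=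
    (Tuple.monotone_sort x).strictMono_of_injective (hxinj.comp (Tuple.sort x).injective)
  have hpointwise (t : ℝ) (ht : t ∈ Icc 0 l) : |f t| ≤ l ^ k * ∫ u in 0..l, |D u| := by
    simpa using abs_le_pow_mul_integral_abs_iteratedDerivWithin hl k hf hsorted
      (fun _ => hxmem _) (fun _ => hfx _) ht
  have hCS : (∫ u in 0..l, |D u|) ^ 2 ≤ l * ∫ u in 0..l, D u ^ 2 := by
    simpa using sq_integral_abs_le_mul_integral_sq hl.le
      (hD.intervalIntegrable_of_Icc hl.le) ((hD.pow 2).intervalIntegrable_of_Icc hl.le)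
  have hL2 : ∫ t in 0..l, f t ^ 2 ≤ (l ^ (k + 1)) ^ 2 * ∫ u in 0..l, D u ^ 2 :=
    calc ∫ t in 0..l, f t ^ 2 ≤ (l ^ k * ∫ u in 0..l, |D u|) ^ 2 * (l - 0) :=
          integral_le_mul_sub_of_abs_le hl.le fun t ht =>
            (abs_pow (f t) 2).trans_le (pow_le_pow_left₀ (abs_nonneg _) (hpointwise t ht) 2)
      _ = l ^ (2 * k) * (∫ u in 0..l, |D u|) ^ 2 * l := by ring
      _ ≤ l ^ (2 * k) * (l * ∫ u in 0..l, D u ^ 2) * l := by gcongr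
      _ = (l ^ (k + 1)) ^ 2 * ∫ u in 0..l, D u ^ 2 := by ring
  calc √(∫ t in 0..l, f t ^ 2) ≤ √((l ^ (k + 1)) ^ 2 * ∫ u in 0..l, D u ^ 2) :=
        Real.sqrt_le_sqrt hL2
    _ = l ^ (k + 1) * √(∫ u in 0..l, D u ^ 2) := by
        rw [Real.sqrt_mul (by positivity), Real.sqrt_sq (by positivity)]
end

section
/- Let k be a natural number, l > 0, and let f : [0, l] → ℝ be of class C^{k+1}. If f vanishes at k + 1 pairwise distinct points of [0, l], then sup_{x ∈ [0,l]} |f(x)| ≤ l^{k+1} · sup_{x ∈ [0,l]} |f^{(k+1)}(x)|. -/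
/-!
By Rolle's theorem between consecutive zeros, `m` distinct zeros of `f` in `[a, b]` give
`m - 1` distinct zeros of `f'` in `(a, b)`; hence `f^{(j)}` vanishes somewhere in `[a, b]` for
every `j ≤ k`. At such a zero the mean value theorem bounds `sup |f^{(j)}|` by
`(b - a) · sup |f^{(j+1)}|`, and chaining these `k + 1` bounds gives `(b - a)^{k+1}`.
-/

open Set

lemma exists_finset_deriv_eq_zero {f : ℝ → ℝ} {a b : ℝ} (hf : ContinuousOn f (Icc a b))
    (s : Finset ℝ) (hs : ↑s ⊆ Icc a b) (hzero : ∀ x ∈ s, f x = 0) :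
    ∃ t : Finset ℝ, ↑t ⊆ Ioo a b ∧ (∀ c ∈ t, deriv f c = 0) ∧
      s.card ≤ t.card + 1 := by
  -- The clause `c < y` keeps the zero found right of `s.max'` apart from the earlier ones.
  suffices ∃ t : Finset ℝ, ↑t ⊆ Ioo a b ∧ (∀ c ∈ t, deriv f c = 0) ∧
      (∀ c ∈ t, ∃ y ∈ s, c < y) ∧ s.card ≤ t.card + 1 by
    obtain ⟨t, hta, htf, -, hcard⟩ := this
    exact ⟨t, hta, htf, hcard⟩
  induction s using Finset.induction_on_max with
  | empty => exact ⟨∅, by simp⟩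
  | insert m s hm ih =>
    rw [Finset.coe_insert, insert_subset_iff] at hs
    obtain ⟨t, hta, htf, hts, hcard⟩ :=
      ih hs.2 fun x hx => hzero x (Finset.mem_insert_of_mem hx)
    rcases s.eq_empty_or_nonempty with rfl | hne
    · exact ⟨∅, by simp⟩
    have hpm : s.max' hne < m := hm _ (s.max'_mem hne)
    have hp : s.max' hne ∈ Icc a b := hs.2 (s.max'_mem hne)
    obtain ⟨c, hc, hfc⟩ := exists_deriv_eq_zero hpm
      (hf.mono (Icc_subset_Icc hp.1 hs.1.2))
      (by rw [hzero _ (Finset.mem_insert_of_mem (s.max'_mem hne)),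
        hzero _ (Finset.mem_insert_self m s)])
    have hct : c ∉ t := fun hct => by
      obtain ⟨y, hy, hcy⟩ := hts c hct
      linarith [s.le_max' y hy, hc.1]
    refine ⟨insert c t, ?_, ?_, ?_, ?_⟩
    · rw [Finset.coe_insert, insert_subset_iff]
      exact ⟨⟨hp.1.trans_lt hc.1, hc.2.trans_le hs.1.2⟩, hta⟩
    · simpa [hfc] using htf
    · simp only [Finset.mem_insert, forall_eq_or_imp]
      exact ⟨⟨m, Or.inl rfl, hc.2⟩,
        fun c' hc' => (hts c' hc').imp fun y hy => ⟨Or.inr hy.1, hy.2⟩⟩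
    · rw [Finset.card_insert_of_notMem (fun hms => (hm m hms).false),
        Finset.card_insert_of_notMem hct]
      omega

lemma abs_le_sSup_abs_image {K : Set ℝ} (hK : IsCompact K) {g : ℝ → ℝ}
    (hg : ContinuousOn g K) {t : ℝ} (ht : t ∈ K) : |g t| ≤ sSup ((fun s => |g s|) '' K) :=
  le_csSup (hK.image_of_continuousOn hg.abs).bddAbove (mem_image_of_mem _ ht)

lemma abs_le_mul_of_abs_derivWithin_le {f : ℝ → ℝ} {a b C x₀ t : ℝ}
    (hf : DifferentiableOn ℝ f (Icc a b))
    (hC : ∀ u ∈ Icc a b, |derivWithin f (Icc a b) u| ≤ C)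
    (hx₀ : x₀ ∈ Icc a b) (hfx₀ : f x₀ = 0) (ht : t ∈ Icc a b) :
    |f t| ≤ (b - a) * C := by
  have hC₀ : 0 ≤ C := (abs_nonneg _).trans (hC x₀ hx₀)
  have hmvt : ‖f t - f x₀‖ ≤ C * ‖t - x₀‖ :=
    (convex_Icc a b).norm_image_sub_le_of_norm_derivWithin_le hf hC hx₀ ht
  have hdist : |t - x₀| ≤ b - a := Real.dist_le_of_mem_Icc ht hx₀
  calc |f t| = ‖f t - f x₀‖ := by rw [hfx₀, sub_zero, Real.norm_eq_abs]
    _ ≤ C * |t - x₀| := hmvt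
    _ ≤ C * (b - a) := mul_le_mul_of_nonneg_left hdist hC₀
    _ = (b - a) * C := mul_comm _ _

lemma abs_le_pow_mul_sSup_abs_iteratedDerivWithin {a b : ℝ} (hab : a < b) (n : ℕ)
    {f : ℝ → ℝ} (hf : ContDiffOn ℝ (n + 1) f (Icc a b)) (s : Finset ℝ) (hs : ↑s ⊆ Icc a b)
    (hcard : n + 1 ≤ s.card) (hzero : ∀ x ∈ s, f x = 0) :
    ∀ t ∈ Icc a b, |f t| ≤ (b - a) ^ (n + 1) *
      sSup ((fun u => |iteratedDerivWithin (n + 1) f (Icc a b) u|) '' Icc a b) := by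
  have hud : UniqueDiffOn ℝ (Icc a b) := uniqueDiffOn_Icc hab
  induction n generalizing f s with
  | zero =>
    intro t ht
    obtain ⟨x₀, hx₀⟩ : s.Nonempty := Finset.card_pos.mp (by omega)
    have hf' : ContinuousOn (iteratedDerivWithin 1 f (Icc a b)) (Icc a b) :=
      hf.continuousOn_iteratedDerivWithin (by simp) hud
    have hbound : ∀ u ∈ Icc a b, |derivWithin f (Icc a b) u| ≤
        sSup ((fun u => |iteratedDerivWithin 1 f (Icc a b) u|) '' Icc a b) := fun u hu => by
      simpa only [iteratedDerivWithin_one] using abs_le_sSup_abs_image isCompact_Icc hf' hu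
    simpa using abs_le_mul_of_abs_derivWithin_le (hf.differentiableOn (by simp)) hbound
      (hs hx₀) (hzero x₀ hx₀) ht
  | succ n ih =>
    intro t ht
    obtain ⟨x₀, hx₀⟩ : s.Nonempty := Finset.card_pos.mp (by omega)
    obtain ⟨r, hr, hrf, hrcard⟩ := exists_finset_deriv_eq_zero hf.continuousOn s hs hzero
    have hf' : ContDiffOn ℝ (n + 1) (derivWithin f (Icc a b)) (Icc a b) :=
      hf.derivWithin hud (by norm_cast)
    have hrzero : ∀ c ∈ r, derivWithin f (Icc a b) c = 0 := fun c hc => by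
      rw [derivWithin_of_mem_nhds (Icc_mem_nhds (hr hc).1 (hr hc).2), hrf c hc]
    have hbound := ih hf' r (hr.trans Ioo_subset_Icc_self) (by omega) hrzero
    simp only [← iteratedDerivWithin_succ'] at hbound
    calc |f t| ≤ (b - a) * ((b - a) ^ (n + 1) *
          sSup ((fun u => |iteratedDerivWithin (n + 2) f (Icc a b) u|) '' Icc a b)) :=
        abs_le_mul_of_abs_derivWithin_le (hf.differentiableOn (by simp)) hbound
          (hs hx₀) (hzero x₀ hx₀) ht
      _ = _ := by ring

/-- If `f : [0,l] → ℝ` is of class `C^{k+1}` and vanishes at `k+1` pairwise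
distinct points of `[0,l]`, then
`sup_{[0,l]} |f| ≤ l^{k+1} · sup_{[0,l]} |f^{(k+1)}|`. -/
theorem sup_interp_estimate (k : ℕ) (l : ℝ) (hl : 0 < l) (f : ℝ → ℝ)
    (hf : ContDiffOn ℝ (k + 1) f (Set.Icc 0 l))
    (x : Fin (k + 1) → ℝ) (hxinj : Function.Injective x)
    (hxmem : ∀ i, x i ∈ Set.Icc (0 : ℝ) l) (hfx : ∀ i, f (x i) = 0) :
    ∀ t ∈ Set.Icc (0 : ℝ) l,
      |f t| ≤ l ^ (k + 1) *
        sSup ((fun s => |iteratedDerivWithin (k + 1) f (Set.Icc 0 l) s|) '' Set.Icc 0 l) := by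
  have hcard : (Finset.univ.image x).card = k + 1 := by
    rw [Finset.card_image_of_injective _ hxinj, Finset.card_univ, Fintype.card_fin]
  have hmem : ↑(Finset.univ.image x) ⊆ Set.Icc (0 : ℝ) l := by
    simpa [Set.subset_def] using hxmem
  have hzero : ∀ y ∈ Finset.univ.image x, f y = 0 := by simpa using hfx
  simpa using abs_le_pow_mul_sSup_abs_iteratedDerivWithin hl k hf _ hmem hcard.ge hzero
end

section
/- Let k be a natural number and let K₁, K₂ be compact subsets of ℝ² with K₁ having nonempty interior. There exists a constant C > 0 such that for every h > 0, every x₀ ∈ ℝ², and every real polynomial p in two variables of total degree at most k, one has sup_{x ∈ x₀ + h·K₂} |p(x)| ≤ C · h⁻¹ · (∫_{x₀ + h·K₁} p(x)² dx)^{1/2}, where x₀ + h·K := {x₀ + h·y : y ∈ K} and the integral is with respect to two-dimensional Lebesgue measure. -/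
/-!
Polynomials of total degree at most `k` form a finite-dimensional space, and on it
`p ↦ ‖p‖_{L²(K₁)}` is a norm, since a polynomial vanishing on the nonempty open set
`interior K₁` is zero. As all norms on a finite-dimensional space are equivalent, it dominates
`sup_{K₂} |p|`: this is the case `x₀ = 0`, `h = 1`. In general apply it to
`q z = p (x₀ + h • z)`, again of degree at most `k`; the integral of `p²` over `x₀ + h • K₁`
is `h²` times that of `q²` over `K₁`, whence the factor `h⁻¹`.
-/

open MeasureTheory Metric Function

theorem LinearMap.exists_norm_le_mul_norm_of_injective {𝕜 V F G : Type*}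
    [NontriviallyNormedField 𝕜] [CompleteSpace 𝕜] [AddCommGroup V] [Module 𝕜 V]
    [FiniteDimensional 𝕜 V] [NormedAddCommGroup F] [NormedSpace 𝕜 F] [NormedAddCommGroup G]
    [NormedSpace 𝕜 G] {T : V →ₗ[𝕜] F} (hT : Injective T) (S : V →ₗ[𝕜] G) :
    ∃ C, 0 < C ∧ ∀ v, ‖S v‖ ≤ C * ‖T v‖ := by
  let e := LinearEquiv.ofInjective T hT
  obtain ⟨C, hC, hbound⟩ := (S ∘ₗ e.symm.toLinearMap).toContinuousLinearMap.bound
  exact ⟨C, hC, fun v => by simpa [e] using hbound (e v)⟩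

theorem ContinuousOn.memLp_restrict_of_isCompact {X E : Type*} [TopologicalSpace X] [T2Space X]
    [MeasurableSpace X] [OpensMeasurableSpace X] {μ : Measure X} [IsFiniteMeasureOnCompacts μ]
    [NormedAddCommGroup E] [SecondCountableTopologyEither X E] {f : X → E} {K : Set X}
    (hK : IsCompact K) (hf : ContinuousOn f K) (q : ENNReal) : MemLp f q (μ.restrict K) := by
  have : IsFiniteMeasure (μ.restrict K) := isFiniteMeasure_restrict.mpr hK.measure_lt_top.ne
  obtain ⟨C, hC⟩ := hK.exists_bound_of_continuousOn hf
  exact .of_bound (hf.aestronglyMeasurable hK.measurableSet) C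
    ((ae_restrict_iff' hK.measurableSet).mpr (ae_of_all _ hC))

theorem MeasureTheory.MemLp.norm_toLp_two {α : Type*} [MeasurableSpace α] {μ : Measure α}
    {f : α → ℝ} (hf : MemLp f 2 μ) : ‖hf.toLp f‖ = √(∫ a, f a ^ 2 ∂μ) := by
  rw [← Real.sqrt_sq (norm_nonneg _), ← real_inner_self_eq_norm_sq, L2.inner_def]
  congr 1
  exact integral_congr_ae (hf.coeFn_toLp.mono fun a ha => by simp [ha, sq])

theorem setIntegral_image_homothety {ι E : Type*} [Fintype ι] [NormedAddCommGroup E]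
    [NormedSpace ℝ E] (f : (ι → ℝ) → E) {s : Set (ι → ℝ)} (hs : MeasurableSet s) (x₀ : ι → ℝ)
    {h : ℝ} (hh : h ≠ 0) :
    ∫ z in (fun y => x₀ + h • y) '' s, f z = |h| ^ Fintype.card ι • ∫ y in s, f (x₀ + h • y) := by
  have hdet : (h • ContinuousLinearMap.id ℝ (ι → ℝ)).det = h ^ Fintype.card ι := by
    simp [ContinuousLinearMap.det, LinearMap.det_smul]
  rw [integral_image_eq_integral_abs_det_fderiv_smul volume hs (f := fun y => x₀ + h • y)
    (fun y _ => (((hasFDerivAt_id y).const_smul h).const_add x₀).hasFDerivWithinAt)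
    (fun a _ b _ hab => smul_right_injective _ hh (add_left_cancel hab)), hdet, abs_pow,
    integral_smul]

namespace MvPolynomial

theorem eq_zero_of_eval_eq_zero_on_isOpen {ι : Type*} [Fintype ι] {p : MvPolynomial ι ℝ}
    {U : Set (ι → ℝ)} (hU : IsOpen U) (hne : U.Nonempty) (h : ∀ x ∈ U, eval x p = 0) :
    p = 0 := by
  obtain ⟨x, hx⟩ := hne
  obtain ⟨r, hr, hball⟩ := Metric.isOpen_iff.mp hU x hx
  refine funext_set (fun i => ball (x i) r) (fun i => ?_) fun y hy => ?_
  · rw [Real.ball_eq_Ioo]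
    exact Set.Ioo_infinite (by linarith)
  · rw [← ball_pi x hr] at hy
    simpa using h y (hball hy)

theorem totalDegree_bind₁_le {σ τ R : Type*} [CommSemiring R] {f : σ → MvPolynomial τ R}
    (hf : ∀ i, (f i).totalDegree ≤ 1) (p : MvPolynomial σ R) :
    (bind₁ f p).totalDegree ≤ p.totalDegree := by
  conv_lhs => rw [p.as_sum, map_sum]
  refine totalDegree_finsetSum_le fun d hd => ?_
  rw [bind₁_monomial]
  calc (C (coeff d p) * ∏ i ∈ d.support, f i ^ d i).totalDegree
      ≤ ∑ i ∈ d.support, (f i ^ d i).totalDegree := by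
        refine (totalDegree_mul _ _).trans ?_
        rw [totalDegree_C, zero_add]
        exact totalDegree_finsetProd _ _
    _ ≤ ∑ i ∈ d.support, d i := Finset.sum_le_sum fun i _ =>
        (totalDegree_pow _ _).trans (by simpa using Nat.mul_le_mul_left (d i) (hf i))
    _ ≤ p.totalDegree := le_totalDegree hd

section Homothety

variable {ι R : Type*} [CommSemiring R]

/-- The polynomial `z ↦ p (x₀ + h • z)`. -/
noncomputable def compHomothety (x₀ : ι → R) (h : R) (p : MvPolynomial ι R) :
    MvPolynomial ι R :=
  bind₁ (fun i => C (x₀ i) + C h * X i) p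

theorem eval_compHomothety (x₀ : ι → R) (h : R) (p : MvPolynomial ι R) (z : ι → R) :
    eval z (compHomothety x₀ h p) = eval (x₀ + h • z) p := by
  rw [compHomothety, eval, eval₂Hom_bind₁, eval]
  congr 2
  funext i
  simp

theorem totalDegree_compHomothety_le (x₀ : ι → R) (h : R) (p : MvPolynomial ι R) :
    (compHomothety x₀ h p).totalDegree ≤ p.totalDegree :=
  totalDegree_bind₁_le (fun i => (totalDegree_add _ _).trans <|
    max_le (by simp) ((totalDegree_mul _ _).trans (by
      rw [totalDegree_C, zero_add, X]
      exact (totalDegree_monomial_le _ _).trans (by simp)))) p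

end Homothety

section Estimate

variable {ι : Type*} [Fintype ι]

theorem memLp_eval_restrict {K : Set (ι → ℝ)} (hK : IsCompact K) (p : MvPolynomial ι ℝ) :
    MemLp (fun x => eval x p) 2 (volume.restrict K) :=
  (continuous_eval p).continuousOn.memLp_restrict_of_isCompact hK 2

noncomputable def evalL2 {K : Set (ι → ℝ)} (hK : IsCompact K) :
    MvPolynomial ι ℝ →ₗ[ℝ] Lp ℝ 2 (volume.restrict K) where
  toFun p := (memLp_eval_restrict hK p).toLp _
  map_add' p q := by
    simp_rw [map_add]
    rfl
  map_smul' c p := by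
    simp_rw [smul_eval]
    rfl

theorem norm_evalL2 {K : Set (ι → ℝ)} (hK : IsCompact K) (p : MvPolynomial ι ℝ) :
    ‖evalL2 hK p‖ = √(∫ z in K, eval z p ^ 2) :=
  (memLp_eval_restrict hK p).norm_toLp_two

theorem evalL2_injective {K : Set (ι → ℝ)} (hK : IsCompact K) (hKi : (interior K).Nonempty) :
    Injective (evalL2 hK) := by
  refine (injective_iff_map_eq_zero _).mpr fun p hp => ?_
  have hae : (fun x => eval x p) =ᵐ[volume.restrict K] 0 :=
    (memLp_eval_restrict hK p).coeFn_toLp.symm.trans (Lp.eq_zero_iff_ae_eq_zero.mp hp)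
  refine eq_zero_of_eval_eq_zero_on_isOpen isOpen_interior hKi fun x hx => ?_
  exact Measure.eqOn_open_of_ae_eq (ae_restrict_of_ae_restrict_of_subset interior_subset hae)
    isOpen_interior (continuous_eval p).continuousOn continuousOn_const hx

noncomputable def toContinuousMapOnₗ (K : Set (ι → ℝ)) : MvPolynomial ι ℝ →ₗ[ℝ] C(K, ℝ) where
  toFun p := ⟨fun x => eval (x : ι → ℝ) p, (continuous_eval p).comp continuous_subtype_val⟩
  map_add' p q := by ext; simp
  map_smul' c p := by ext; simp

theorem exists_abs_eval_le_mul_sqrt_integral_sq (k : ℕ) {K₁ K₂ : Set (ι → ℝ)}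
    (hK₁c : IsCompact K₁) (hK₂c : IsCompact K₂) (hK₁i : (interior K₁).Nonempty) :
    ∃ C, 0 < C ∧ ∀ p : MvPolynomial ι ℝ, p.totalDegree ≤ k →
      ∀ x ∈ K₂, |eval x p| ≤ C * √(∫ z in K₁, eval z p ^ 2) := by
  have := isCompact_iff_compactSpace.mp hK₂c
  let V := restrictTotalDegree ι ℝ k
  obtain ⟨C, hC, hbound⟩ := LinearMap.exists_norm_le_mul_norm_of_injective
    (T := evalL2 hK₁c ∘ₗ V.subtype) ((evalL2_injective hK₁c hK₁i).comp Subtype.val_injective)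
    (toContinuousMapOnₗ K₂ ∘ₗ V.subtype)
  refine ⟨C, hC, fun p hp x hx => ?_⟩
  calc |eval x p| = ‖toContinuousMapOnₗ K₂ p ⟨x, hx⟩‖ := rfl
    _ ≤ ‖toContinuousMapOnₗ K₂ p‖ := ContinuousMap.norm_coe_le_norm _ _
    _ ≤ C * ‖evalL2 hK₁c p‖ := hbound ⟨p, (mem_restrictTotalDegree _ _ _).mpr hp⟩
    _ = C * √(∫ z in K₁, eval z p ^ 2) := by rw [norm_evalL2]

end Estimate

end MvPolynomial

/-- Scaled inverse estimate: for compact `K₁, K₂ ⊆ ℝ²` with `K₁` having nonempty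
interior, there is `C > 0` such that for all `h > 0`, `x₀ ∈ ℝ²` and every
bivariate polynomial `p` of total degree at most `k`,
`sup_{x₀ + h·K₂} |p| ≤ C h⁻¹ (∫_{x₀ + h·K₁} p²)^{1/2}`. -/
theorem poly_scaled_inverse_estimate (k : ℕ) (K₁ K₂ : Set (Fin 2 → ℝ))
    (hK₁c : IsCompact K₁) (hK₂c : IsCompact K₂) (hK₁i : (interior K₁).Nonempty) :
    ∃ C : ℝ, 0 < C ∧ ∀ h : ℝ, 0 < h → ∀ x₀ : Fin 2 → ℝ,
      ∀ p : MvPolynomial (Fin 2) ℝ, p.totalDegree ≤ k →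
        ∀ x ∈ (fun y => x₀ + h • y) '' K₂,
          |MvPolynomial.eval x p| ≤
            C * h⁻¹ *
              Real.sqrt (∫ z in (fun y => x₀ + h • y) '' K₁, (MvPolynomial.eval z p) ^ 2) := by
  obtain ⟨C, hC, hbound⟩ :=
    MvPolynomial.exists_abs_eval_le_mul_sqrt_integral_sq k hK₁c hK₂c hK₁i
  refine ⟨C, hC, fun h hh x₀ p hp _ ⟨y, hy, hxy⟩ => ?_⟩
  have hq := hbound (p.compHomothety x₀ h)
    ((MvPolynomial.totalDegree_compHomothety_le x₀ h p).trans hp) y hy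
  simp only [MvPolynomial.eval_compHomothety] at hq
  rw [← hxy, setIntegral_image_homothety _ hK₁c.measurableSet x₀ hh.ne', Fintype.card_fin,
    smul_eq_mul, Real.sqrt_mul (by positivity), Real.sqrt_sq (abs_nonneg h), abs_of_pos hh,
    mul_assoc, inv_mul_cancel_left₀ hh.ne']
  exact hq
end
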